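/- Let X be a Banach space and let P, Q : X → X be two bounded linear projectors (P∘P = P, Q∘Q = Q) with ‖P − Q‖ < δ for some δ with 0 < δ < √2 − 1. Then for every x in the range of Q, ‖x − Q(P x)‖ ≤ δ(2 + δ)‖x‖; in particular, since δ(2+δ) < 1, the map x ↦ Q(P x) is invertible on the range of Q. -/

import Mathlib

/-!
On the range of `Q`, write `x - Q (P x) = (Q - P) x + (P - Q) (P x)`, using `Q x = x` and
`P (P x) = P x`. Both terms are controlled by `‖P - Q‖ < δ`, and `‖P x‖ ≤ (1 + δ) ‖x‖`, which gives
the bound `δ (2 + δ)`. Since `δ < √2 - 1` means `(1 + δ)² < 2`, this constant is below `1`, so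
`Q ∘ P` restricted to the closed subspace `range Q` is a perturbation of the identity of norm
`< 1`, hence invertible by the Neumann series.
-/

open Function

section Perturbation

variable {𝕜 E : Type*} [NontriviallyNormedField 𝕜] [SeminormedAddCommGroup E] [NormedSpace 𝕜 E]

theorem norm_sub_apply_apply_le_of_isIdempotentElem {P Q : E →L[𝕜] E} (hP : IsIdempotentElem P)
    {δ : ℝ} (hδ : 0 ≤ δ) (hPQ : ‖P - Q‖ ≤ δ) {x : E} (hx : Q x = x) :
    ‖x - Q (P x)‖ ≤ δ * (2 + δ) * ‖x‖ := by
  have hPPx : P (P x) = P x := congr($hP.eq x)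
  have hQP : ‖(Q - P) x‖ ≤ δ * ‖x‖ := by
    rw [← norm_neg, ← neg_apply, neg_sub]
    exact (P - Q).le_of_opNorm_le hPQ x
  have hPx : ‖P x‖ ≤ (1 + δ) * ‖x‖ :=
    calc ‖P x‖ = ‖x - (Q - P) x‖ := by simp [hx]
      _ ≤ ‖x‖ + δ * ‖x‖ := (norm_sub_le _ _).trans (by gcongr)
      _ = (1 + δ) * ‖x‖ := by ring
  calc ‖x - Q (P x)‖ = ‖(Q - P) x + (P - Q) (P x)‖ := by simp [hx, hPPx]
    _ ≤ δ * ‖x‖ + δ * ((1 + δ) * ‖x‖) :=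
      (norm_add_le _ _).trans <| add_le_add hQP <|
        ((P - Q).le_of_opNorm_le hPQ _).trans (mul_le_mul_of_nonneg_left hPx hδ)
    _ = δ * (2 + δ) * ‖x‖ := by ring

end Perturbation

namespace ContinuousLinearMap

variable {𝕜 E : Type*} [NontriviallyNormedField 𝕜] [NormedAddCommGroup E] [NormedSpace 𝕜 E]
  [CompleteSpace E]

theorem bijective_of_norm_sub_apply_le {T : E →L[𝕜] E} {k : ℝ} (hk0 : 0 ≤ k) (hk1 : k < 1)
    (hT : ∀ x, ‖x - T x‖ ≤ k * ‖x‖) : Bijective T := by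
  have h : ‖1 - T‖ < 1 := (opNorm_le_bound _ hk0 hT).trans_lt hk1
  exact isUnit_iff_bijective.1 (by simpa using isUnit_one_sub_of_norm_lt_one h)

theorem existsUnique_mem_apply_eq_of_norm_sub_apply_le {T : E →L[𝕜] E} {p : Submodule 𝕜 E}
    (hp : IsClosed (p : Set E)) (hTp : ∀ x ∈ p, T x ∈ p) {k : ℝ} (hk0 : 0 ≤ k) (hk1 : k < 1)
    (hT : ∀ x ∈ p, ‖x - T x‖ ≤ k * ‖x‖) {y : E} (hy : y ∈ p) :
    ∃! x, x ∈ p ∧ T x = y := by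
  have : CompleteSpace p := hp.completeSpace_coe
  have hbij : Bijective (T.restrict hTp) :=
    bijective_of_norm_sub_apply_le hk0 hk1 fun x ↦ hT x x.2
  obtain ⟨x, hx⟩ := hbij.2 ⟨y, hy⟩
  refine ⟨x, ⟨x.2, congr($hx.1)⟩, fun x' ⟨hx', hTx'⟩ ↦ ?_⟩
  have : T.restrict hTp ⟨x', hx'⟩ = T.restrict hTp x := Subtype.ext (hTx'.trans congr($hx.1).symm)
  exact congr($(hbij.1 this).1)

end ContinuousLinearMap

/-- Nearby projectors: `x ↦ Q (P x)` is close to the identity on the range of `Q`,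
and hence invertible on the range of `Q`. -/
theorem stmt0 {X : Type*} [NormedAddCommGroup X] [NormedSpace ℝ X] [CompleteSpace X]
    (P Q : X →L[ℝ] X) (hP : P.comp P = P) (hQ : Q.comp Q = Q)
    (δ : ℝ) (hδ0 : 0 < δ) (hδ1 : δ < Real.sqrt 2 - 1) (hPQ : ‖P - Q‖ < δ) :
    (∀ x ∈ Set.range Q, ‖x - Q (P x)‖ ≤ δ * (2 + δ) * ‖x‖) ∧
    (∀ y ∈ Set.range Q, ∃! x, x ∈ Set.range Q ∧ Q (P x) = y) := by
  have hQidem : IsIdempotentElem Q := hQ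
  have hbound : ∀ x ∈ Set.range Q, ‖x - Q (P x)‖ ≤ δ * (2 + δ) * ‖x‖ := by
    rintro _ ⟨z, rfl⟩
    exact norm_sub_apply_apply_le_of_isIdempotentElem hP hδ0.le hPQ.le congr($hQidem.eq z)
  have hk1 : δ * (2 + δ) < 1 := by
    have hsqrt : Real.sqrt 2 ^ 2 = 2 := Real.sq_sqrt zero_le_two
    nlinarith [Real.sqrt_nonneg 2]
  refine ⟨hbound, fun y hy ↦ ?_⟩
  exact (Q ∘L P).existsUnique_mem_apply_eq_of_norm_sub_apply_le
    (ContinuousLinearMap.IsIdempotentElem.isClosed_range hQidem)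
    (fun x _ ↦ LinearMap.mem_range.2 ⟨P x, rfl⟩) (by positivity) hk1 hbound hy
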